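/- Let κ be a regular uncountable cardinal and T a uniformly homogeneous streamlined κ-tree. Then V(T) coincides with the set of all limit ordinals α < κ for which there exists a vanishing α-branch of T. -/

import Mathlib

noncomputable section

open Ordinal Set

/-- A node of a streamlined tree over `κ` is a function `s : α → κ` for an ordinal `α`;
we code it by its graph, a set of pairs `(ε, v)`. -/
abbrev PNode : Type 1 := Set (Ordinal × Ordinal)

/-- The set of ordinals in the domain of a coded node. -/
def ndom (s : PNode) : Set Ordinal := {ε | ∃ v, (ε, v) ∈ s}

/-- `s` codes a function from (the ordinals below) `α` to (the ordinals below) `ν`. -/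
def IsNodeOf (ν α : Ordinal) (s : PNode) : Prop :=
  (∀ p ∈ s, p.1 < α ∧ p.2 < ν) ∧ ∀ ε, ε < α → ∃! v : Ordinal, (ε, v) ∈ s

/-- The restriction `s ↾ α` of a node. -/
def nrestrict (s : PNode) (α : Ordinal) : PNode := {p ∈ s | p.1 < α}

/-- The node `s * t`, with domain `dom t`, agreeing with `s` on `dom s` and with `t` elsewhere. -/
def nstar (s t : PNode) : PNode :=
  {p ∈ s | p.1 ∈ ndom t} ∪ {p ∈ t | p.1 ∉ ndom s}

/-- The `α`-th level of a tree. -/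
def level (T : Set PNode) (α : Ordinal) : Set PNode := {t ∈ T | ndom t = Set.Iio α}

/-- A streamlined tree: closed under restrictions. -/
def IsStreamlined (T : Set PNode) : Prop := ∀ t ∈ T, ∀ α : Ordinal, nrestrict t α ∈ T

/-- Uniform homogeneity. -/
def UnifHomog (T : Set PNode) : Prop := ∀ s ∈ T, ∀ t ∈ T, nstar s t ∈ T

/-- Normality for a tree of height `h`. -/
def IsNormalOfHeight (T : Set PNode) (h : Ordinal) : Prop :=
  ∀ x ∈ T, ∀ α, α < h → ∃ y ∈ level T α, x ⊆ y ∨ y ⊆ x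

/-- Two nodes are mutually exclusive iff they disagree everywhere on their common domain. -/
def MutExc (s t : PNode) : Prop :=
  ∀ ε v w : Ordinal, (ε, v) ∈ s → (ε, w) ∈ t → v ≠ w

/-- `s =* t` : same domain and agreement on a final segment of the domain. -/
def EqStar (s t : PNode) : Prop :=
  ndom s = ndom t ∧ ∃ α ∈ ndom s, ∀ β, α ≤ β → ∀ v : Ordinal, ((β, v) ∈ s ↔ (β, v) ∈ t)

/-- `Δ(s,t)`: the least element of `{dom s, dom t} ∪ {δ ∈ dom s ∩ dom t ∣ s(δ) ≠ t(δ)}`. -/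
def nDelta (s t : PNode) : Ordinal :=
  sInf ({δ | δ ∉ ndom s} ∪ {δ | δ ∉ ndom t} ∪
    {δ | ∃ v w : Ordinal, (δ, v) ∈ s ∧ (δ, w) ∈ t ∧ v ≠ w})

/-- `supp(f,g)` for two `θ`-sequences of nodes. -/
def supp (θo : Ordinal) (f g : Ordinal → PNode) : Set Ordinal :=
  {τ | τ < θo ∧ (f τ ⊆ g τ ∨ g τ ⊆ f τ)}

/-- An `α`-branch of `T`. -/
def IsBranch (T : Set PNode) (α : Ordinal) (B : Set PNode) : Prop :=
  B ⊆ T ∧ (∀ x ∈ B, ∀ y ∈ B, x ⊆ y ∨ y ⊆ x) ∧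
    {β : Ordinal | ∃ x ∈ B, ndom x = Set.Iio β} = Set.Iio α

/-- The set `V(T)` of vanishing levels of `T`. -/
def VSet (T : Set PNode) : Set Ordinal :=
  {α | Order.IsSuccLimit α ∧ ∀ x ∈ T, (∃ β, β < α ∧ ndom x = Set.Iio β) →
    ∃ B, IsBranch T α B ∧ x ∈ B ∧ ⋃₀ B ∉ T}

/-- A closed set of ordinals. -/
def OrdClosed (A : Set Ordinal) : Prop :=
  ∀ α : Ordinal, Order.IsSuccLimit α → (∀ β, β < α → (A ∩ Set.Ioo β α).Nonempty) → α ∈ A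

/-- A mutually exclusive `F`-ascent path (`F` given via the membership predicate `InF`)
through a tree `T` of height `γ`. -/
def MEAscentPath (θo : Ordinal) (InF : Set Ordinal → Prop) (T : Set PNode) (γ : Ordinal)
    (f : Ordinal → Ordinal → PNode) : Prop :=
  (∀ α, α < γ → ∀ τ, τ < θo → f α τ ∈ level T α) ∧
  (∀ α β, α < β → β < γ → InF (supp θo (f α) (f β))) ∧
  (∀ α, 0 < α → α < γ → ∀ τ τ', τ < θo → τ' < θo → τ ≠ τ' → MutExc (f α τ) (f α τ'))

/-- A condition: a pair `⟨T, f⟩` together with the ordinal `η` such that `T` has height `η + 1`. -/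
structure SCond : Type 1 where
  T : Set PNode
  f : Ordinal.{0} → Ordinal.{0} → PNode
  η : Ordinal.{0}

/-- Membership in the filter generated by the decreasing sequence `X` of length `ζ`. -/
def InFX (ζ : Ordinal) (X : Ordinal → Set Ordinal) (Y : Set Ordinal) : Prop :=
  ∃ ξ, ξ < ζ ∧ X ξ ⊆ Y

/-- `p` is a condition of the forcing `𝕊^κ_𝐗`. -/
def IsSCondX (κ : Cardinal) (θo : Ordinal) (InF : Set Ordinal → Prop) (p : SCond) : Prop :=
  (∀ t ∈ p.T, ∃ α, α ≤ p.η ∧ IsNodeOf κ.ord α t) ∧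
  IsStreamlined p.T ∧
  UnifHomog p.T ∧
  IsNormalOfHeight p.T (p.η + 1) ∧
  (∀ α, α ≤ p.η → (level p.T α).Nonempty) ∧
  (∀ α, α ≤ p.η → Cardinal.mk ↥(level p.T α) < Cardinal.lift.{1} κ) ∧
  MEAscentPath θo InF p.T (p.η + 1) p.f ∧
  OrdClosed (VSet p.T) ∧
  (Order.IsSuccLimit p.η → p.η ∈ VSet p.T) ∧
  (∀ α, 0 < α → α ≤ p.η → ∀ t ∈ level p.T α, InF {τ | τ < θo ∧ MutExc t (p.f α τ)})

/-- `p ≤ q` in `𝕊^κ_𝐗` (and in `𝕊^κ_θ`): `p` end-extends `q` in both coordinates. -/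
def sext (θo : Ordinal) (p q : SCond) : Prop :=
  q.η ≤ p.η ∧
  (∀ t : PNode, t ∈ q.T ↔ (t ∈ p.T ∧ ∃ α, α ≤ q.η ∧ ndom t = Set.Iio α)) ∧
  (∀ α, α ≤ q.η → ∀ τ, τ < θo → p.f α τ = q.f α τ)

/-- Even ordinals (limit ordinals are even). -/
def EvenOrd (β : Ordinal) : Prop := ∃ γ : Ordinal, β = 2 * γ

/-- Player II has a winning strategy in the game `⅁_μ(P)`: she can choose conditions at all
even (incl. limit) stages `< μ`, only as a function of the previous moves, so that as long as
player I plays legally at odd stages, the resulting `μ`-sequence is decreasing. -/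
def WinningStratII {P : Type*} (le : P → P → Prop) (μ : Ordinal) : Prop :=
  ∃ σ : (β : Ordinal) → ({γ : Ordinal // γ < β} → P) → P,
    ∀ g : Ordinal → P,
      (∀ β, β < μ →
        (EvenOrd β → g β = σ β (fun γ => g γ.1)) ∧
        (¬ EvenOrd β → ∀ γ, γ < β → le (g β) (g γ))) →
      ∀ γ β, γ < β → β < μ → le (g β) (g γ)

/-!
If `B` is a vanishing `α`-branch and `x ∈ T` lies below level `α`, then translating `B` by `x`,
i.e. taking `{x * b : b ∈ B}`, gives an `α`-branch through `x` whose union is `x * ⋃B`. Were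
`x * ⋃B` in `T`, then so would be `b * (x * ⋃B) = b * ⋃B = ⋃B` for the `b ∈ B` with
`dom b = dom x`, by uniform homogeneity.
-/

lemma IsNodeOf.eq_of_mem {ν γ : Ordinal} {s : PNode} (h : IsNodeOf ν γ s) {ε v w : Ordinal}
    (hv : (ε, v) ∈ s) (hw : (ε, w) ∈ s) : v = w :=
  (h.2 ε (h.1 _ hv).1).unique hv hw

lemma mem_ndom {s : PNode} {p : Ordinal × Ordinal} (hp : p ∈ s) : p.1 ∈ ndom s :=
  ⟨p.2, hp⟩

lemma ndom_mono {s t : PNode} (h : s ⊆ t) : ndom s ⊆ ndom t :=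
  fun _ ⟨v, hv⟩ => ⟨v, h hv⟩

lemma ndom_nstar (s t : PNode) : ndom (nstar s t) = ndom t := by
  ext ε
  constructor
  · rintro ⟨v, ⟨-, hd⟩ | ⟨hv, -⟩⟩
    · exact hd
    · exact ⟨v, hv⟩
  · rintro ⟨v, hv⟩
    by_cases h : ε ∈ ndom s
    · obtain ⟨w, hw⟩ := h
      exact ⟨w, Or.inl ⟨hw, v, hv⟩⟩
    · exact ⟨v, Or.inr ⟨hv, h⟩⟩

lemma nstar_mono_right (s : PNode) {t t' : PNode} (h : t ⊆ t') : nstar s t ⊆ nstar s t' := by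
  rintro p (⟨hp, hd⟩ | ⟨hp, hd⟩)
  · exact Or.inl ⟨hp, ndom_mono h hd⟩
  · exact Or.inr ⟨h hp, hd⟩

lemma nstar_eq_left_of_ndom_eq {s t : PNode} (h : ndom t = ndom s) : nstar s t = s := by
  ext p
  constructor
  · rintro (⟨hp, -⟩ | ⟨hp, hd⟩)
    · exact hp
    · exact absurd (h ▸ mem_ndom hp) hd
  · intro hp
    exact Or.inl ⟨hp, h ▸ mem_ndom hp⟩

lemma nstar_nstar_of_ndom_eq {s x : PNode} (h : ndom x = ndom s) (t : PNode) :
    nstar s (nstar x t) = nstar s t := by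
  ext p
  rw [nstar, ndom_nstar]
  simp only [nstar, mem_union, mem_ofPred_eq, h]
  have hx : p ∈ x → p.1 ∈ ndom s := fun hp => h ▸ mem_ndom hp
  tauto

lemma nstar_sUnion (s : PNode) (B : Set PNode) : nstar s (⋃₀ B) = ⋃₀ (nstar s '' B) := by
  ext p
  simp only [nstar, ndom, sUnion_image, mem_iUnion, mem_union, mem_ofPred_eq, mem_sUnion,
    exists_prop]
  constructor
  · rintro (⟨hp, v, b, hb, hv⟩ | ⟨⟨b, hb, hp⟩, hd⟩)
    · exact ⟨b, hb, Or.inl ⟨hp, v, hv⟩⟩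
    · exact ⟨b, hb, Or.inr ⟨hp, hd⟩⟩
  · rintro ⟨b, hb, ⟨hp, v, hv⟩ | ⟨hp, hd⟩⟩
    · exact Or.inl ⟨hp, v, b, hb, hv⟩
    · exact Or.inr ⟨⟨b, hb, hp⟩, hd⟩

lemma nstar_sUnion_of_mem {ν : Ordinal} {B : Set PNode}
    (hchain : ∀ x ∈ B, ∀ y ∈ B, x ⊆ y ∨ y ⊆ x) (hnode : ∀ c ∈ B, ∃ γ, IsNodeOf ν γ c)
    {b : PNode} (hb : b ∈ B) : nstar b (⋃₀ B) = ⋃₀ B := by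
  ext p
  constructor
  · rintro (⟨hp, -⟩ | ⟨hp, -⟩)
    · exact ⟨b, hb, hp⟩
    · exact hp
  · intro hp
    have ⟨c, hc, hpc⟩ := hp
    by_cases hd : p.1 ∈ ndom b
    · refine Or.inl ⟨?_, mem_ndom hp⟩
      rcases hchain b hb c hc with hbc | hcb
      · obtain ⟨v, hv⟩ := hd
        obtain ⟨γ, hγ⟩ := hnode c hc
        rwa [hγ.eq_of_mem (hbc hv) hpc] at hv
      · exact hcb hpc
    · exact Or.inr ⟨hp, hd⟩

lemma UnifHomog.nstar_mem_of_ndom_eq {T : Set PNode} (hT : UnifHomog T) {s x t : PNode}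
    (hs : s ∈ T) (h : ndom x = ndom s) (hxt : nstar x t ∈ T) : nstar s t ∈ T :=
  nstar_nstar_of_ndom_eq h t ▸ hT s hs _ hxt

lemma IsBranch.image_nstar {T : Set PNode} (hT : UnifHomog T) {α : Ordinal} {B : Set PNode}
    (hB : IsBranch T α B) {x : PNode} (hx : x ∈ T) : IsBranch T α (nstar x '' B) := by
  obtain ⟨hBT, hchain, hdom⟩ := hB
  refine ⟨?_, ?_, ?_⟩
  · rintro _ ⟨b, hb, rfl⟩
    exact hT x hx b (hBT hb)
  · rintro _ ⟨b, hb, rfl⟩ _ ⟨c, hc, rfl⟩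
    exact (hchain b hb c hc).imp (nstar_mono_right x) (nstar_mono_right x)
  · simpa only [exists_mem_image, ndom_nstar] using hdom

lemma IsBranch.exists_mem_ndom_eq {T : Set PNode} {α β : Ordinal} {B : Set PNode}
    (hB : IsBranch T α B) (hβ : β < α) : ∃ b ∈ B, ndom b = Iio β :=
  show β ∈ {β : Ordinal | ∃ x ∈ B, ndom x = Iio β} from hB.2.2 ▸ hβ

theorem statement1_general
    (κ : Cardinal)
    (T : Set PNode)
    (hnodes : ∀ t ∈ T, ∃ α, α < κ.ord ∧ IsNodeOf κ.ord α t)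
    (hlevne : ∀ α, α < κ.ord → (level T α).Nonempty)
    (hhom : UnifHomog T) :
    ∀ α, α < κ.ord →
      (α ∈ VSet T ↔ (Order.IsSuccLimit α ∧ ∃ B, IsBranch T α B ∧ ⋃₀ B ∉ T)) := by
  intro α hα
  constructor
  · rintro ⟨hlim, hV⟩
    obtain ⟨x, hxT, hxdom⟩ := hlevne 0 (hlim.pos.trans hα)
    obtain ⟨B, hB, -, hU⟩ := hV x hxT ⟨0, hlim.pos, hxdom⟩
    exact ⟨hlim, B, hB, hU⟩
  · rintro ⟨hlim, B, hB, hU⟩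
    refine ⟨hlim, fun x hx ⟨β, hβ, hxdom⟩ => ?_⟩
    obtain ⟨b, hb, hbdom⟩ := hB.exists_mem_ndom_eq hβ
    have hbx : ndom x = ndom b := hxdom.trans hbdom.symm
    refine ⟨_, hB.image_nstar hhom hx, ⟨b, hb, nstar_eq_left_of_ndom_eq hbx.symm⟩, ?_⟩
    rw [← nstar_sUnion]
    intro hxU
    have hnode : ∀ c ∈ B, ∃ γ, IsNodeOf κ.ord γ c := fun c hc =>
      (hnodes c (hB.1 hc)).imp fun _ => And.right
    exact hU (nstar_sUnion_of_mem hB.2.1 hnode hb ▸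
      hhom.nstar_mem_of_ndom_eq (hB.1 hb) hbx hxU)

/-- for a uniformly homogeneous streamlined `κ`-tree `T`, the set `V(T)` of
vanishing levels coincides with the set of limit ordinals `α < κ` admitting a vanishing
`α`-branch. -/
theorem statement1
    (κ : Cardinal) (hκreg : κ.IsRegular) (hκunc : Cardinal.aleph0 < κ)
    (T : Set PNode)
    (hnodes : ∀ t ∈ T, ∃ α, α < κ.ord ∧ IsNodeOf κ.ord α t)
    (hstream : IsStreamlined T)
    (hlevne : ∀ α, α < κ.ord → (level T α).Nonempty)
    (hlevsm : ∀ α, α < κ.ord → Cardinal.mk ↥(level T α) < Cardinal.lift.{1} κ)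
    (hhom : UnifHomog T) :
    ∀ α, α < κ.ord →
      (α ∈ VSet T ↔ (Order.IsSuccLimit α ∧ ∃ B, IsBranch T α B ∧ ⋃₀ B ∉ T)) :=
  statement1_general κ T hnodes hlevne hhom
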